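/- Let H be a complex Hilbert space, let A and B be positive bounded operators on H, and let (B_n) be a sequence of positive bounded operators with B_0 = B such that for every n, B_n − B_{n+1} is positive and ⟪(B_n − B_{n+1})x, x⟫ = inf{ ⟪B_n(x−y), x−y⟫ + ⟪A y, y⟫ : y ∈ H } for all x ∈ H; let B_s be the strong operator limit of (B_n). Let (D_n) be a sequence of positive bounded operators satisfying ⟪D_n x, x⟫ = inf{ n·⟪A(x−y), x−y⟫ + ⟪B y, y⟫ : y ∈ H } for all x ∈ H (i.e., D_n = (nA) : B). Then (D_n) is nondecreasing in the operator order, D_n ≤ B for all n, and (D_n) converges in the strong operator topology to B − B_s. -/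

import Mathlib

set_option linter.unusedSectionVars false
set_option linter.unusedVariables false
set_option maxHeartbeats 1000000

open ContinuousLinearMap Filter Topology

variable {H : Type*} [NormedAddCommGroup H] [InnerProductSpace ℂ H] [CompleteSpace H]

namespace Stmt10

noncomputable def qf (T : H →L[ℂ] H) (x : H) : ℝ := (inner ℂ (T x) x : ℂ).re

lemma qf_nonneg {T : H →L[ℂ] H} (hT : T.IsPositive) (x : H) : 0 ≤ qf T x := by
  have := hT.2 x
  simpa [qf, ContinuousLinearMap.reApplyInnerSelf, RCLike.re_to_complex] using this

lemma qf_zero (T : H →L[ℂ] H) : qf T 0 = 0 := by simp [qf]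

lemma qf_sub_apply (S T : H →L[ℂ] H) (x : H) : qf (S - T) x = qf S x - qf T x := by
  simp [qf, ContinuousLinearMap.sub_apply, inner_sub_left, Complex.sub_re]

lemma re_inner_symm {T : H →L[ℂ] H} (hT : IsSelfAdjoint T) (u v : H) :
    (inner ℂ (T u) v : ℂ).re = (inner ℂ (T v) u : ℂ).re := by
  have h := (isSelfAdjoint_iff_isSymmetric.mp hT) u v
  have h' : (inner ℂ (T u) v : ℂ) = inner ℂ u (T v) := h
  rw [h']
  have := inner_re_symm (𝕜 := ℂ) u (T v)
  simpa [RCLike.re_to_complex] using this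

lemma qf_expand {T : H →L[ℂ] H} (hT : IsSelfAdjoint T) (a b : ℝ) (u v : H) :
    qf T ((a : ℂ) • u + (b : ℂ) • v)
      = a ^ 2 * qf T u + b ^ 2 * qf T v + 2 * a * b * (inner ℂ (T u) v : ℂ).re := by
  have hsymm := re_inner_symm hT v u
  simp only [qf, map_add, map_smul, inner_add_left, inner_add_right, inner_smul_left,
    inner_smul_right, Complex.add_re, Complex.mul_re, Complex.conj_ofReal, Complex.ofReal_re,
    Complex.ofReal_im]
  rw [hsymm]
  ring

lemma cs {T : H →L[ℂ] H} (hT : T.IsPositive) (u v : H) :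
    (inner ℂ (T u) v : ℂ).re ^ 2 ≤ qf T u * qf T v := by
  have key : ∀ t : ℝ, 0 ≤ qf T v * (t * t) + (2 * (inner ℂ (T u) v : ℂ).re) * t + qf T u := by
    intro t
    have he := qf_expand hT.isSelfAdjoint 1 t u v
    have h := qf_nonneg hT (((1:ℝ) : ℂ) • u + ((t:ℝ) : ℂ) • v)
    rw [he] at h
    nlinarith [h]
  have hd := discrim_le_zero key
  rw [discrim] at hd
  nlinarith [hd]

lemma aux2 (p q c s : ℝ) (hp : 0 ≤ p) (hq : 0 ≤ q) (hc : c ^ 2 ≤ p * q) (hs : 0 ≤ s) :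
    2 * (s * c) ≤ s ^ 2 * p + q := by
  rcases le_or_gt (s * c) 0 with h | h
  · nlinarith [mul_nonneg (mul_nonneg hs hs) hp]
  · have h1 : (2 * (s * c)) ^ 2 ≤ (s ^ 2 * p + q) ^ 2 := by
      nlinarith [sq_nonneg (s^2*p - q), sq_nonneg (s*c), mul_nonneg hp hq]
    have h2 : 0 ≤ s ^ 2 * p + q := by positivity
    nlinarith [h1, h2, h]

/-- the two-convex-combination inequality -/
lemma combo {T : H →L[ℂ] H} (hT : T.IsPositive) (θ : ℝ) (h0 : 0 ≤ θ) (h1 : θ ≤ 1) (P Q : H) :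
    qf T (((1 - θ : ℝ) : ℂ) • P + ((θ : ℝ) : ℂ) • Q)
      + qf T (((θ : ℝ) : ℂ) • P + ((1 - θ : ℝ) : ℂ) • Q) ≤ qf T P + qf T Q := by
  have e1 := qf_expand hT.isSelfAdjoint (1 - θ) θ P Q
  have e2 := qf_expand hT.isSelfAdjoint θ (1 - θ) P Q
  have hc := cs hT P Q
  have hcle : 2 * (1 * (inner ℂ (T P) Q : ℂ).re) ≤ 1 ^ 2 * qf T P + qf T Q :=
    aux2 _ _ _ _ (qf_nonneg hT P) (qf_nonneg hT Q) hc zero_le_one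
  have hθ : 0 ≤ θ * (1 - θ) := mul_nonneg h0 (by linarith)
  rw [e1, e2]
  nlinarith [mul_le_mul_of_nonneg_left hcle hθ]

/-- Peter–Paul : s/(1+s) q(u+v) ≤ s q(u) + q(v) -/
lemma peter_paul {T : H →L[ℂ] H} (hT : T.IsPositive) (s : ℝ) (hs : 0 < s) (u v : H) :
    s / (1 + s) * qf T (u + v) ≤ s * qf T u + qf T v := by
  have e := qf_expand hT.isSelfAdjoint 1 1 u v
  simp only [Complex.ofReal_one, one_smul, one_pow, one_mul, mul_one] at e
  have hc := cs hT u v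
  have h2 : 2 * (s * (inner ℂ (T u) v : ℂ).re) ≤ s ^ 2 * qf T u + qf T v :=
    aux2 _ _ _ _ (qf_nonneg hT u) (qf_nonneg hT v) hc hs.le
  have h1s : 0 < 1 + s := by linarith
  rw [div_mul_eq_mul_div, div_le_iff₀ h1s]
  have := qf_nonneg hT u
  have := qf_nonneg hT v
  nlinarith [e, h2]

lemma bdd_nonneg {F : H → ℝ} (h : ∀ y, 0 ≤ F y) : BddBelow (Set.range F) :=
  ⟨0, by rintro r ⟨y, rfl⟩; exact h y⟩

lemma iInf_swap_sub (F G : H → ℝ) (hF : ∀ z, 0 ≤ F z) (hG : ∀ z, 0 ≤ G z) (x : H) :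
    (⨅ y : H, (F (x - y) + G y)) = ⨅ y : H, (F y + G (x - y)) := by
  have hb1 : BddBelow (Set.range fun y : H => F (x - y) + G y) :=
    bdd_nonneg fun y => add_nonneg (hF _) (hG _)
  have hb2 : BddBelow (Set.range fun y : H => F y + G (x - y)) :=
    bdd_nonneg fun y => add_nonneg (hF _) (hG _)
  apply le_antisymm
  · refine le_ciInf fun y => ?_
    refine ciInf_le_of_le hb1 (x - y) ?_
    rw [sub_sub_cancel]
  · refine le_ciInf fun y => ?_
    refine ciInf_le_of_le hb2 (x - y) ?_
    rw [sub_sub_cancel]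

lemma qf_smul (T : H →L[ℂ] H) (r : ℝ) (z : H) : qf T ((r : ℂ) • z) = r ^ 2 * qf T z := by
  simp only [qf, map_smul, inner_smul_left, inner_smul_right, Complex.conj_ofReal,
    Complex.mul_re, Complex.ofReal_re, Complex.ofReal_im]
  ring

lemma isPositive_of_qf (T : H →L[ℂ] H) (hsa : IsSelfAdjoint T) (h : ∀ x, 0 ≤ qf T x) :
    T.IsPositive :=
  ⟨isSelfAdjoint_iff_isSymmetric.mp hsa, fun z => by
    simpa [ContinuousLinearMap.reApplyInnerSelf, RCLike.re_to_complex, qf] using h z⟩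

lemma theta_ineq (n p q c : ℝ) (hn : 0 ≤ n) (hp : 0 ≤ p) (hq : 0 ≤ q) :
    ∃ θ : ℝ, 0 ≤ θ ∧ θ ≤ 1 ∧
      (n + 1) * ((1 - θ) ^ 2 * p + θ ^ 2 * q + 2 * (1 - θ) * θ * c)
        + (1 - θ) ^ 2 * (q + p - 2 * c) ≤ q + n * p := by
  rcases le_or_gt p q with hc | hc
  · refine ⟨1 / (n + 2), by positivity, ?_, ?_⟩
    · rw [div_le_one (by linarith)]; linarith
    · have h2 : (0 : ℝ) < n + 2 := by linarith
      rw [← sub_nonneg]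
      have hkey : q + n * p - ((n + 1) * ((1 - 1/(n+2)) ^ 2 * p + (1/(n+2)) ^ 2 * q
          + 2 * (1 - 1/(n+2)) * (1/(n+2)) * c) + (1 - 1/(n+2)) ^ 2 * (q + p - 2 * c))
          = (q - p) / (n + 2) := by
        field_simp
        ring
      rw [hkey]
      exact div_nonneg (by linarith) (by linarith)
  · exact ⟨1, zero_le_one, le_refl 1, by nlinarith⟩

end Stmt10

open Stmt10

/-- With `Bs` the strong limit of the Arlinskii iteration for `A, B`, the parallel sums
`Dₙ = (n A) : B` form a nondecreasing sequence of positive operators bounded by `B` which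
converges strongly to `B - Bs`. -/
theorem statement10
    (A B : H →L[ℂ] H) (hA : A.IsPositive) (hB : B.IsPositive)
    (Bn : ℕ → H →L[ℂ] H) (hBnpos : ∀ n, (Bn n).IsPositive) (hB0 : Bn 0 = B)
    (hstep : ∀ n, (Bn n - Bn (n + 1)).IsPositive ∧ ∀ x : H,
      (inner ℂ ((Bn n - Bn (n + 1)) x) x : ℂ).re =
        ⨅ y : H, ((inner ℂ ((Bn n) (x - y)) (x - y) : ℂ).re + (inner ℂ (A y) y : ℂ).re))
    (Bs : H →L[ℂ] H) (hBs : ∀ x : H, Tendsto (fun n => Bn n x) atTop (𝓝 (Bs x)))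
    (D : ℕ → H →L[ℂ] H) (hDpos : ∀ n, (D n).IsPositive)
    (hD : ∀ n, ∀ x : H, (inner ℂ (D n x) x : ℂ).re =
      ⨅ y : H, ((n : ℝ) * (inner ℂ (A (x - y)) (x - y) : ℂ).re + (inner ℂ (B y) y : ℂ).re)) :
    (∀ m n, m ≤ n → D m ≤ D n) ∧
    (∀ n, D n ≤ B) ∧
    (∀ x : H, Tendsto (fun n => D n x) atTop (𝓝 ((B - Bs) x))) := by
  have hAsa : IsSelfAdjoint A := hA.isSelfAdjoint
  have hqA : ∀ z : H, 0 ≤ qf A z := qf_nonneg hA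
  have hqB : ∀ z : H, 0 ≤ qf B z := qf_nonneg hB
  have hqBn : ∀ n (z : H), 0 ≤ qf (Bn n) z := fun n => qf_nonneg (hBnpos n)
  -- reformulate hD
  have hD' : ∀ n (x : H), qf (D n) x = ⨅ y : H, ((n : ℝ) * qf A (x - y) + qf B y) :=
    fun n x => hD n x
  -- reformulate hstep
  have hg : ∀ k (x : H), qf (Bn k) x - qf (Bn (k+1)) x
      = ⨅ y : H, (qf (Bn k) (x - y) + qf A y) := by
    intro k x
    rw [← qf_sub_apply]
    exact (hstep k).2 x
  have hstep_nn : ∀ k (x : H), 0 ≤ qf (Bn k) x - qf (Bn (k+1)) x := by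
    intro k x
    rw [← qf_sub_apply]
    exact qf_nonneg (hstep k).1 x
  have hanti : ∀ x : H, Antitone fun n => qf (Bn n) x := fun x =>
    antitone_nat_of_succ_le fun k => by linarith [hstep_nn k x]
  have hconv : ∀ x : H, Tendsto (fun n => qf (Bn n) x) atTop (𝓝 (qf Bs x)) := by
    intro x
    have h1 : Tendsto (fun n => (inner ℂ (Bn n x) x : ℂ)) atTop (𝓝 (inner ℂ (Bs x) x)) :=
      (hBs x).inner tendsto_const_nhds
    exact (Complex.continuous_re.tendsto _).comp h1
  have hBs_le : ∀ n (x : H), qf Bs x ≤ qf (Bn n) x := fun n x =>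
    le_of_tendsto (hconv x)
      (eventually_atTop.2 ⟨n, fun m hm => show qf (Bn m) x ≤ qf (Bn n) x from hanti x hm⟩)
  have hBsnn : ∀ x : H, 0 ≤ qf Bs x := fun x =>
    ge_of_tendsto (hconv x) (Eventually.of_forall fun n => hqBn n x)
  have hBn_le_B : ∀ n (x : H), qf (Bn n) x ≤ qf B x := by
    intro n x
    have h : qf (Bn n) x ≤ qf (Bn 0) x := hanti x (Nat.zero_le n)
    rwa [hB0] at h
  have hg_le : ∀ k (x : H), qf (Bn k) x - qf (Bn (k+1)) x ≤ qf A x := by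
    intro k x
    rw [hg k x]
    refine ciInf_le_of_le (bdd_nonneg fun y => add_nonneg (hqBn _ _) (hqA _)) x ?_
    simp [qf_zero]
  have htel : ∀ n (x : H), qf B x - qf (Bn n) x
      = ∑ k ∈ Finset.range n, (qf (Bn k) x - qf (Bn (k+1)) x) := by
    intro n x
    rw [Finset.sum_range_sub' (f := fun k => qf (Bn k) x), hB0]
  -- bddBelow helper
  have hbddF : ∀ (r : ℝ), 0 ≤ r → ∀ (j : ℕ) (x : H),
      BddBelow (Set.range fun y : H => r * qf A y + qf (Bn j) (x - y)) := fun r hr j x =>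
    bdd_nonneg fun y => add_nonneg (mul_nonneg hr (hqA y)) (hqBn j _)
  -- THE KEY INDUCTION
  have key : ∀ (n j : ℕ) (x : H),
      (⨅ y : H, ((n : ℝ) * qf A y + qf (Bn j) (x - y))) ≤ qf (Bn j) x - qf (Bn (j + n)) x := by
    intro n
    induction n with
    | zero =>
      intro j x
      refine ciInf_le_of_le (hbddF _ (by norm_num) j x) x ?_
      simp [qf_zero]
    | succ n ih =>
      intro j x
      have hstep' : (⨅ y : H, (((n : ℕ) + 1 : ℝ) * qf A y + qf (Bn j) (x - y)))
          ≤ (qf (Bn j) x - qf (Bn (j+1)) x)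
            + ⨅ y : H, ((n : ℝ) * qf A y + qf (Bn (j+1)) (x - y)) := by
        refine le_of_forall_pos_le_add fun ε hε => ?_
        -- choose u : near minimizer for the step functional at x
        have h1 : (⨅ y : H, (qf (Bn j) (x - y) + qf A y))
            < (qf (Bn j) x - qf (Bn (j+1)) x) + ε/2 := by
          rw [← hg j x]; linarith
        obtain ⟨u, hu⟩ := exists_lt_of_ciInf_lt h1
        -- choose v : near minimizer for the (n, j+1) functional at x
        have h2 : (⨅ y : H, ((n : ℝ) * qf A y + qf (Bn (j+1)) (x - y)))
            < (⨅ y : H, ((n : ℝ) * qf A y + qf (Bn (j+1)) (x - y))) + ε/2 :=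
          lt_add_of_pos_right _ (half_pos hε)
        obtain ⟨v, hv⟩ := exists_lt_of_ciInf_lt h2
        -- choose θ
        obtain ⟨θ, hθ0, hθ1, hθkey⟩ := theta_ineq (n : ℝ) (qf A v) (qf A u)
          ((inner ℂ (A v) u : ℂ).re) (Nat.cast_nonneg n) (hqA v) (hqA u)
        set y0 : H := ((1 - θ : ℝ) : ℂ) • v + ((θ : ℝ) : ℂ) • u with hy0
        set w : H := ((1 - θ : ℝ) : ℂ) • (u - v) with hw
        -- expansions
        have hexp_y : qf A y0 = (1-θ)^2 * qf A v + θ^2 * qf A u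
            + 2*(1-θ)*θ*(inner ℂ (A v) u : ℂ).re := qf_expand hAsa (1-θ) θ v u
        have hvec_uv : u - v = ((-1 : ℝ) : ℂ) • v + ((1 : ℝ) : ℂ) • u := by
          push_cast
          module
        have hexp_uv : qf A (u - v) = qf A u + qf A v - 2 * (inner ℂ (A v) u : ℂ).re := by
          rw [hvec_uv, qf_expand hAsa (-1) 1 v u]
          ring
        have hexp_w : qf A w = (1-θ)^2 * (qf A u + qf A v - 2 * (inner ℂ (A v) u : ℂ).re) := by
          rw [hw, qf_smul, hexp_uv]
        -- A-part inequality
        have hA3 : ((n : ℝ) + 1) * qf A y0 + qf A w ≤ qf A u + (n : ℝ) * qf A v := by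
          rw [hexp_y, hexp_w]
          linarith [hθkey]
        -- vector identities
        have hcast : ((1 - θ : ℝ) : ℂ) = 1 - ((θ : ℝ) : ℂ) := by push_cast; ring
        have hvec1 : x - y0 = ((1 - θ : ℝ) : ℂ) • (x - v) + ((θ : ℝ) : ℂ) • (x - u) := by
          rw [hy0, hcast]
          module
        have hvec2 : (x - v) - w = ((θ : ℝ) : ℂ) • (x - v) + ((1 - θ : ℝ) : ℂ) • (x - u) := by
          rw [hw, hcast]
          module
        -- B-part inequality
        have hB2 : qf (Bn j) (x - y0) + qf (Bn j) ((x - v) - w)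
            ≤ qf (Bn j) (x - v) + qf (Bn j) (x - u) := by
          rw [hvec1, hvec2]
          exact combo (hBnpos j) θ hθ0 hθ1 (x - v) (x - u)
        -- splitting inequality from hg at the point x - v
        have hB1 : qf (Bn j) (x - v) - qf (Bn (j+1)) (x - v)
            ≤ qf (Bn j) ((x - v) - w) + qf A w := by
          rw [hg j (x - v)]
          exact ciInf_le (bdd_nonneg fun y => add_nonneg (hqBn _ _) (hqA _)) w
        -- assemble
        have hfin : (⨅ y : H, (((n : ℕ) + 1 : ℝ) * qf A y + qf (Bn j) (x - y)))
            ≤ ((n : ℝ) + 1) * qf A y0 + qf (Bn j) (x - y0) := by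
          have := ciInf_le (hbddF ((n : ℕ) + 1 : ℝ) (by positivity) j x) y0
          simpa using this
        linarith [hfin, hA3, hB2, hB1, hu, hv]
      have hcast2 : ((n + 1 : ℕ) : ℝ) = (n : ℝ) + 1 := by push_cast; ring
      have hidx : j + 1 + n = j + (n + 1) := by omega
      calc (⨅ y : H, (((n+1 : ℕ) : ℝ) * qf A y + qf (Bn j) (x - y)))
          = (⨅ y : H, (((n : ℕ) + 1 : ℝ) * qf A y + qf (Bn j) (x - y))) := by
            simp only [hcast2]
        _ ≤ (qf (Bn j) x - qf (Bn (j+1)) x)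
            + ⨅ y : H, ((n : ℝ) * qf A y + qf (Bn (j+1)) (x - y)) := hstep'
        _ ≤ (qf (Bn j) x - qf (Bn (j+1)) x)
            + (qf (Bn (j+1)) x - qf (Bn (j+1+n)) x) := by
            have := ih (j+1) x
            linarith
        _ = qf (Bn j) x - qf (Bn (j + (n+1))) x := by rw [hidx]; ring
  -- monotonicity of forms of D
  have hmono : ∀ m n, m ≤ n → ∀ z : H, qf (D m) z ≤ qf (D n) z := by
    intro m n hmn z
    rw [hD' m z, hD' n z]
    refine ciInf_mono (bdd_nonneg fun y =>
      add_nonneg (mul_nonneg (Nat.cast_nonneg m) (hqA _)) (hqB _)) fun y => ?_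
    have hc : (m : ℝ) ≤ (n : ℝ) := Nat.cast_le.2 hmn
    nlinarith [hqA (z - y)]
  -- upper bound : qf (D n) z ≤ qf B z
  have hDleB : ∀ n (z : H), qf (D n) z ≤ qf B z := by
    intro n z
    rw [hD' n z]
    refine ciInf_le_of_le (bdd_nonneg fun y =>
      add_nonneg (mul_nonneg (Nat.cast_nonneg n) (hqA _)) (hqB _)) z ?_
    simp [qf_zero]
  -- upper bound against B - Bs
  have hub : ∀ n (z : H), qf (D n) z ≤ qf B z - qf Bs z := by
    intro n z
    have h1 : qf (D n) z = ⨅ y : H, ((n : ℝ) * qf A y + qf B (z - y)) := by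
      rw [hD' n z]
      exact iInf_swap_sub (fun t => (n : ℝ) * qf A t) (qf B)
        (fun t => mul_nonneg (Nat.cast_nonneg n) (hqA t)) hqB z
    have h2 := key n 0 z
    rw [hB0] at h2
    simp only [Nat.zero_add] at h2
    have h3 : qf (Bn n) z ≥ qf Bs z := hBs_le n z
    linarith [h1 ▸ h2]
  -- lower bound
  have hlow : ∀ (x : H), ∀ ε > (0:ℝ), ∃ m : ℕ, qf B x - qf Bs x - ε ≤ qf (D m) x := by
    intro x ε hε
    have hev : ∀ᶠ k in atTop, qf (Bn k) x < qf Bs x + ε/2 :=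
      (hconv x).eventually_lt_const (by linarith)
    obtain ⟨n₀, hn₀⟩ := eventually_atTop.1 hev
    set n : ℕ := max n₀ 1 with hn
    have hn1 : 1 ≤ n := le_max_right _ _
    have hnlt : qf (Bn n) x < qf Bs x + ε/2 := hn₀ n (le_max_left _ _)
    have hSsa : IsSelfAdjoint (B - Bn n) := hB.isSelfAdjoint.sub (hBnpos n).isSelfAdjoint
    have hSq : ∀ z : H, qf (B - Bn n) z = qf B z - qf (Bn n) z := fun z => qf_sub_apply _ _ z
    have hSpos : (B - Bn n).IsPositive := isPositive_of_qf _ hSsa fun z => by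
      rw [hSq z]; linarith [hBn_le_B n z]
    have hSA : ∀ z : H, qf (B - Bn n) z ≤ (n : ℝ) * qf A z := by
      intro z
      rw [hSq z, htel n z]
      calc ∑ k ∈ Finset.range n, (qf (Bn k) z - qf (Bn (k+1)) z)
          ≤ ∑ _k ∈ Finset.range n, qf A z := Finset.sum_le_sum fun k _ => hg_le k z
        _ = (n : ℝ) * qf A z := by
            rw [Finset.sum_const, Finset.card_range, nsmul_eq_mul]
    have hSB : ∀ z : H, qf (B - Bn n) z ≤ qf B z := fun z => by
      rw [hSq z]; linarith [hqBn n z]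
    have hnpos : (0:ℝ) < (n : ℝ) := by exact_mod_cast hn1
    -- Peter-Paul lower bound for every m ≥ 1
    have hlb : ∀ m : ℕ, 1 ≤ m → (m:ℝ)/((m:ℝ)+(n:ℝ)) * qf (B - Bn n) x ≤ qf (D m) x := by
      intro m hm
      rw [hD' m x]
      refine le_ciInf fun y => ?_
      have hmpos : (0:ℝ) < (m : ℝ) := by exact_mod_cast hm
      have hpp := peter_paul hSpos ((m:ℝ)/(n:ℝ)) (by positivity) (x - y) y
      rw [sub_add_cancel] at hpp
      have hne : (n:ℝ) ≠ 0 := hnpos.ne'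
      have hratio : (m:ℝ)/((m:ℝ)+(n:ℝ)) = ((m:ℝ)/(n:ℝ))/(1+(m:ℝ)/(n:ℝ)) := by
        rw [div_eq_div_iff (by positivity) (by positivity)]
        field_simp
        ring
      have h5 : ((m:ℝ)/(n:ℝ)) * qf (B - Bn n) (x - y) ≤ (m:ℝ) * qf A (x - y) := by
        have h6 := hSA (x - y)
        rw [div_mul_eq_mul_div, div_le_iff₀ hnpos]
        nlinarith [h6, hmpos.le]
      rw [hratio]
      linarith [hpp, h5, hSB y]
    -- choose m
    have hqS_ge : qf B x - qf Bs x - ε/2 ≤ qf (B - Bn n) x := by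
      rw [hSq x]; linarith
    obtain ⟨m₁, hm₁⟩ := exists_nat_ge (2 * (n:ℝ) * qf B x / ε)
    refine ⟨max m₁ 1, ?_⟩
    set m : ℕ := max m₁ 1 with hm
    have hm1 : 1 ≤ m := le_max_right _ _
    have hmpos : (0:ℝ) < (m:ℝ) := by exact_mod_cast hm1
    have hmge : 2 * (n:ℝ) * qf B x / ε ≤ (m:ℝ) := by
      refine hm₁.trans ?_
      exact_mod_cast Nat.cast_le.2 (le_max_left m₁ 1)
    have hqBx : 0 ≤ qf B x := hqB x
    have hnqB : (n:ℝ) * qf B x ≤ ε/2 * (m:ℝ) := by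
      rw [div_le_iff₀ hε] at hmge
      nlinarith
    have hnqS : (n:ℝ) * qf (B - Bn n) x ≤ ε/2 * ((m:ℝ)+(n:ℝ)) := by
      have h7 : (n:ℝ) * qf (B - Bn n) x ≤ (n:ℝ) * qf B x :=
        mul_le_mul_of_nonneg_left (hSB x) hnpos.le
      nlinarith [hqB x]
    have hmn : (0:ℝ) < (m:ℝ)+(n:ℝ) := by positivity
    have h8 : qf (B - Bn n) x - ε/2 ≤ (m:ℝ)/((m:ℝ)+(n:ℝ)) * qf (B - Bn n) x := by
      rw [div_mul_eq_mul_div, le_div_iff₀ hmn]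
      nlinarith [hnqS]
    have h9 := hlb m hm1
    linarith [hqS_ge, h8, h9]
  -- convergence of forms
  have hform : ∀ x : H, Tendsto (fun n => qf (D n) x) atTop (𝓝 (qf B x - qf Bs x)) := by
    intro x
    have hmonoX : Monotone fun n => qf (D n) x := fun a b hab => hmono a b hab x
    have hbdd : BddAbove (Set.range fun n => qf (D n) x) :=
      ⟨qf B x - qf Bs x, by rintro r ⟨n, rfl⟩; exact hub n x⟩
    have h1 := tendsto_atTop_ciSup hmonoX hbdd
    have h2 : (⨆ n, qf (D n) x) = qf B x - qf Bs x := by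
      apply le_antisymm (ciSup_le fun n => hub n x)
      refine le_of_forall_pos_le_add fun ε hε => ?_
      obtain ⟨m, hm⟩ := hlow x ε hε
      have h3 : qf (D m) x ≤ ⨆ n, qf (D n) x := le_ciSup hbdd m
      linarith
    rwa [h2] at h1
  -- Bs is selfadjoint
  have hBssa : IsSelfAdjoint Bs := by
    rw [isSelfAdjoint_iff_isSymmetric]
    intro x y
    have h1 : Tendsto (fun n => (inner ℂ (Bn n x) y : ℂ)) atTop (𝓝 (inner ℂ (Bs x) y)) :=
      (hBs x).inner tendsto_const_nhds
    have h2 : Tendsto (fun n => (inner ℂ (Bn n x) y : ℂ)) atTop (𝓝 (inner ℂ x (Bs y))) := by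
      have h2' : Tendsto (fun n => (inner ℂ x (Bn n y) : ℂ)) atTop (𝓝 (inner ℂ x (Bs y))) :=
        tendsto_const_nhds.inner (hBs y)
      exact h2'.congr fun n =>
        ((isSelfAdjoint_iff_isSymmetric.mp (hBnpos n).isSelfAdjoint) x y).symm
    exact tendsto_nhds_unique h1 h2
  -- bound for the quadratic form of B - Bs by the operator norm
  have hqCbound : ∀ v : H, qf (B - Bs) v ≤ ‖B - Bs‖ * ‖v‖^2 := by
    intro v
    have h1 : qf (B - Bs) v ≤ ‖(inner ℂ ((B - Bs) v) v : ℂ)‖ := by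
      rw [qf]
      exact Complex.re_le_norm _
    have h2 : ‖(inner ℂ ((B - Bs) v) v : ℂ)‖ ≤ ‖(B - Bs) v‖ * ‖v‖ := norm_inner_le_norm _ _
    have h3 : ‖(B - Bs) v‖ ≤ ‖B - Bs‖ * ‖v‖ := le_opNorm _ v
    have h4 : 0 ≤ ‖v‖ := norm_nonneg v
    nlinarith
  -- the three conclusions
  refine ⟨?_, ?_, ?_⟩
  · intro m n hmn
    rw [ContinuousLinearMap.le_def]
    exact isPositive_of_qf _ ((hDpos n).isSelfAdjoint.sub (hDpos m).isSelfAdjoint) fun z => by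
      rw [qf_sub_apply]; linarith [hmono m n hmn z]
  · intro n
    rw [ContinuousLinearMap.le_def]
    exact isPositive_of_qf _ (hB.isSelfAdjoint.sub (hDpos n).isSelfAdjoint) fun z => by
      rw [qf_sub_apply]; linarith [hDleB n z]
  · intro x
    have hTpos : ∀ n, (B - Bs - D n).IsPositive := fun n =>
      isPositive_of_qf _ ((hB.isSelfAdjoint.sub hBssa).sub (hDpos n).isSelfAdjoint) fun z => by
        rw [qf_sub_apply, qf_sub_apply]; linarith [hub n z]
    have hbound : ∀ n, ‖(B - Bs - D n) x‖^2 ≤ ‖B - Bs‖ * qf (B - Bs - D n) x := by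
      intro n
      have hcs := cs (hTpos n) x ((B - Bs - D n) x)
      have hre : (inner ℂ ((B - Bs - D n) x) ((B - Bs - D n) x) : ℂ).re
          = ‖(B - Bs - D n) x‖^2 := by
        have := inner_self_eq_norm_sq (𝕜 := ℂ) (x := (B - Bs - D n) x)
        simpa [RCLike.re_to_complex] using this
      have hqfT : qf (B - Bs - D n) ((B - Bs - D n) x) = (inner ℂ ((B - Bs - D n) ((B - Bs - D n) x)) ((B - Bs - D n) x) : ℂ).re := rfl
      have h4 : qf (B - Bs - D n) ((B - Bs - D n) x) ≤ qf (B - Bs) ((B - Bs - D n) x) := by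
        rw [qf_sub_apply]
        linarith [qf_nonneg (hDpos n) ((B - Bs - D n) x)]
      have h5 := hqCbound ((B - Bs - D n) x)
      have hqT0 := qf_nonneg (hTpos n) x
      rcases eq_or_ne (‖(B - Bs - D n) x‖) 0 with h0 | h0
      · rw [h0]
        have h6 : (0:ℝ) ≤ ‖B - Bs‖ := norm_nonneg _
        nlinarith
      · have hpos : (0:ℝ) < ‖(B - Bs - D n) x‖^2 := by positivity
        have h6 : ‖(B - Bs - D n) x‖^2 * ‖(B - Bs - D n) x‖^2
            ≤ (‖B - Bs‖ * qf (B - Bs - D n) x) * ‖(B - Bs - D n) x‖^2 := by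
          have h7 : qf (B - Bs - D n) x * qf (B - Bs - D n) ((B - Bs - D n) x)
              ≤ qf (B - Bs - D n) x * (‖B - Bs‖ * ‖(B - Bs - D n) x‖^2) :=
            mul_le_mul_of_nonneg_left (h4.trans h5) hqT0
          have h8 : (inner ℂ ((B - Bs - D n) x) ((B - Bs - D n) x) : ℂ).re ^ 2
              ≤ qf (B - Bs - D n) x * (‖B - Bs‖ * ‖(B - Bs - D n) x‖^2) := le_trans hcs h7
          rw [hre] at h8
          nlinarith [h8]
        exact le_of_mul_le_mul_right h6 hpos
    have hq0 : Tendsto (fun n => qf (B - Bs - D n) x) atTop (𝓝 0) := by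
      have he : ∀ n, qf (B - Bs - D n) x = (qf B x - qf Bs x) - qf (D n) x := fun n => by
        rw [qf_sub_apply, qf_sub_apply]
      have h1 := tendsto_const_nhds (x := qf B x - qf Bs x) (f := atTop (α := ℕ)) |>.sub (hform x)
      simp only [sub_self] at h1
      exact h1.congr fun n => (he n).symm
    have hnorm2 : Tendsto (fun n => ‖(B - Bs - D n) x‖^2) atTop (𝓝 0) := by
      have hlim : Tendsto (fun n => ‖B - Bs‖ * qf (B - Bs - D n) x) atTop (𝓝 0) := by
        have := tendsto_const_nhds (x := ‖B - Bs‖) (f := atTop (α := ℕ)) |>.mul hq0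
        simpa using this
      exact squeeze_zero (fun n => sq_nonneg _) hbound hlim
    have hnorm : Tendsto (fun n => ‖(B - Bs - D n) x‖) atTop (𝓝 0) := by
      have h1 := (Real.continuous_sqrt.tendsto 0).comp hnorm2
      simp only [Function.comp_def, Real.sqrt_zero] at h1
      refine h1.congr fun n => ?_
      rw [Real.sqrt_sq (norm_nonneg _)]
    rw [tendsto_iff_norm_sub_tendsto_zero]
    refine hnorm.congr fun n => ?_
    rw [show (B - Bs - D n) x = (B - Bs) x - D n x by
      simp [ContinuousLinearMap.sub_apply], norm_sub_rev]
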